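/- arXiv:1801.05240 — 4 statements merged into one kernel-verified Lean document; each statement's English description precedes it below -/
import Mathlib

section
/- Let ~ be an equivalence relation on V^n with classes C_1,...,C_N, uniform distributions Q_k on C_k, and suppose there are constants α_1,...,α_N ≥ 1 and ~-exchangeable probability distributions π_1,...,π_N with Q_k ≤ α_k π_k pointwise for each k. Then for every ~-exchangeable distribution P on V^n, P ≤ N α^2 Σ_{k=1}^N (1/N) F(P, π_k)^2 π_k pointwise, where α = max_k α_k. -/
open scoped Classical BigOperators

noncomputable section

noncomputable def unifClass {W : Type*} [Fintype W] (s : Setoid W) (c : Quotient s) :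
    W → ℝ :=
  fun v => if Quotient.mk s v = c
    then (1 : ℝ) / (Finset.univ.filter (fun w => Quotient.mk s w = c)).card else 0

noncomputable def fidelity {W : Type*} [Fintype W] (P Q : W → ℝ) : ℝ :=
  ∑ v, Real.sqrt (P v) * Real.sqrt (Q v)

/-! If `v` lies in the class `C`, the bound `Q_k ≤ a π` at `v` reads `|C| a π(v) ≥ 1`. Since `P`
and `π` are constant on `C`, the part of the fidelity sum over `C` alone is `|C| √(P v) √(π v)`,
hence `√(P v) ≤ a F(P, π) √(π v)`. Squaring and bounding `a ≤ α`, the summand of the class of `v`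
alone dominates `P v`. -/

section

variable {W : Type*} [Fintype W]

theorem card_mul_sqrt_mul_sqrt_le_fidelity {P Q : W → ℝ} {C : Finset W} {v : W}
    (hP : ∀ w ∈ C, P w = P v) (hQ : ∀ w ∈ C, Q w = Q v) :
    C.card * (Real.sqrt (P v) * Real.sqrt (Q v)) ≤ fidelity P Q :=
  calc C.card * (Real.sqrt (P v) * Real.sqrt (Q v))
      = ∑ w ∈ C, Real.sqrt (P w) * Real.sqrt (Q w) := by
        rw [Finset.sum_congr rfl fun w hw => by rw [hP w hw, hQ w hw], Finset.sum_const,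
          nsmul_eq_mul]
    _ ≤ fidelity P Q :=
        Finset.sum_le_univ_sum_of_nonneg fun _ => by positivity

variable (s : Setoid W)

theorem unifClass_apply_self (v : W) :
    unifClass s (Quotient.mk s v) v =
      1 / (Finset.univ.filter fun w => Quotient.mk s w = Quotient.mk s v).card := by
  simp [unifClass]

theorem le_sq_mul_sq_fidelity_mul {P Q : W → ℝ} {a : ℝ} (hP0 : ∀ w, 0 ≤ P w)
    (hQ0 : ∀ w, 0 ≤ Q w) (hPexch : ∀ v w, s.r v w → P v = P w)
    (hQexch : ∀ v w, s.r v w → Q v = Q w) {v : W}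
    (hQ : unifClass s (Quotient.mk s v) v ≤ a * Q v) :
    P v ≤ a ^ 2 * fidelity P Q ^ 2 * Q v := by
  set C := Finset.univ.filter fun w => Quotient.mk s w = Quotient.mk s v
  have hC : (0 : ℝ) < C.card := by
    exact_mod_cast Finset.card_pos.mpr ⟨v, by simp [C]⟩
  have hmass : 1 ≤ C.card * (a * Q v) := by
    rwa [unifClass_apply_self, div_le_iff₀' hC] at hQ
  have ha : 0 ≤ a := by
    by_contra! ha
    nlinarith [mul_nonneg hC.le (hQ0 v)]
  have hclass : ∀ w ∈ C, s.r w v := fun w hw => Quotient.exact (Finset.mem_filter.mp hw).2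
  have hF : C.card * (Real.sqrt (P v) * Real.sqrt (Q v)) ≤ fidelity P Q :=
    card_mul_sqrt_mul_sqrt_le_fidelity (fun w hw => hPexch w v (hclass w hw))
      (fun w hw => hQexch w v (hclass w hw))
  have hsqrt : Real.sqrt (P v) ≤ a * Real.sqrt (Q v) * fidelity P Q :=
    calc Real.sqrt (P v) ≤ Real.sqrt (P v) * (C.card * (a * Q v)) :=
          le_mul_of_one_le_right (Real.sqrt_nonneg _) hmass
      _ = a * Real.sqrt (Q v) * (C.card * (Real.sqrt (P v) * Real.sqrt (Q v))) := by
          linear_combination (-(Real.sqrt (P v) * C.card * a)) * Real.mul_self_sqrt (hQ0 v)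
      _ ≤ a * Real.sqrt (Q v) * fidelity P Q := by gcongr
  calc P v = Real.sqrt (P v) ^ 2 := (Real.sq_sqrt (hP0 v)).symm
    _ ≤ (a * Real.sqrt (Q v) * fidelity P Q) ^ 2 := by gcongr
    _ = a ^ 2 * fidelity P Q ^ 2 * Q v := by rw [mul_pow, mul_pow, Real.sq_sqrt (hQ0 v)]; ring

end

theorem stmt2_general {V : Type*} [Fintype V] (n : ℕ) (s : Setoid (Fin n → V))
    (α : Quotient s → ℝ) (hα : ∀ k, 1 ≤ α k)
    (π : Quotient s → (Fin n → V) → ℝ)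
    (hπ0 : ∀ k v, 0 ≤ π k v)
    (hπexch : ∀ k v w, s.r v w → π k v = π k w)
    (hQπ : ∀ k v, unifClass s k v ≤ α k * π k v)
    (P : (Fin n → V) → ℝ) (hP0 : ∀ v, 0 ≤ P v)
    (hPexch : ∀ v w, s.r v w → P v = P w)
    (N : ℕ) (hN : N = Fintype.card (Quotient s))
    (αmax : ℝ) (hαmax : αmax = ⨆ k, α k) :
    ∀ v, P v ≤ N * αmax^2 * ∑ k : Quotient s,
      (1 / (N : ℝ)) * (fidelity P (π k))^2 * π k v := by
  intro v
  set k := Quotient.mk s v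
  have hN0 : (N : ℝ) ≠ 0 := by
    rw [hN]; exact_mod_cast (Fintype.card_pos_iff.mpr ⟨k⟩).ne'
  have hαk : α k ≤ αmax := hαmax ▸ le_ciSup (Finite.bddAbove_range α) k
  have hterm : ∀ k', 0 ≤ fidelity P (π k') ^ 2 * π k' v := fun k' => by
    have := hπ0 k' v; positivity
  calc P v ≤ α k ^ 2 * fidelity P (π k) ^ 2 * π k v :=
        le_sq_mul_sq_fidelity_mul s hP0 (hπ0 k) hPexch (hπexch k) (hQπ k v)
    _ ≤ αmax ^ 2 * (fidelity P (π k) ^ 2 * π k v) := by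
        rw [mul_assoc]
        exact mul_le_mul_of_nonneg_right (pow_le_pow_left₀ (by linarith [hα k]) hαk 2) (hterm k)
    _ ≤ αmax ^ 2 * ∑ k', fidelity P (π k') ^ 2 * π k' v := by
        gcongr; exact Finset.single_le_sum (fun k' _ => hterm k') (Finset.mem_univ k)
    _ = N * αmax ^ 2 * ∑ k', (1 / (N : ℝ)) * fidelity P (π k') ^ 2 * π k' v := by
        simp only [mul_assoc, ← Finset.mul_sum]
        field_simp

/-- General flexible de Finetti reduction: if each extreme point `Q_k` of the set of
`∼`-exchangeable distributions is bounded by `α_k π_k` for exchangeable distributions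
`π_k`, then every `∼`-exchangeable distribution `P` satisfies
`P ≤ N α² ∑_k (1/N) F(P, π_k)² π_k` pointwise, where `α = max_k α_k`. -/
theorem stmt2 {V : Type*} [Fintype V] (n : ℕ) (s : Setoid (Fin n → V))
    (α : Quotient s → ℝ) (hα : ∀ k, 1 ≤ α k)
    (π : Quotient s → (Fin n → V) → ℝ)
    (hπ0 : ∀ k v, 0 ≤ π k v) (hπ1 : ∀ k, ∑ v, π k v = 1)
    (hπexch : ∀ k v w, s.r v w → π k v = π k w)
    (hQπ : ∀ k v, unifClass s k v ≤ α k * π k v)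
    (P : (Fin n → V) → ℝ) (hP0 : ∀ v, 0 ≤ P v) (hP1 : ∑ v, P v = 1)
    (hPexch : ∀ v w, s.r v w → P v = P w)
    (N : ℕ) (hN : N = Fintype.card (Quotient s))
    (αmax : ℝ) (hαmax : αmax = ⨆ k, α k) :
    ∀ v, P v ≤ N * αmax^2 * ∑ k : Quotient s,
      (1 / (N : ℝ)) * (fidelity P (π k))^2 * π k v :=
  stmt2_general n s α hα π hπ0 hπexch hQπ P hP0 hPexch N hN αmax hαmax
end
end

section
/- For nonnegative integers t_1,...,t_d summing to n, (n^n / (t_1^{t_1} ⋯ t_d^{t_d})) ⋅ (t_1! ⋯ t_d! / n!) ≤ (e^d/√(2π)) √(t_1 ⋯ t_d / n), with the convention 0^0 = 1 and where terms with t_i = 0 contribute factor 1. -/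
open scoped BigOperators
open Stirling Real

lemma stirling_seq_ge (n : ℕ) : Real.sqrt Real.pi ≤ stirlingSeq (n+1) :=
  Antitone.le_of_tendsto stirlingSeq'_antitone
    (tendsto_stirlingSeq_sqrt_pi.comp (Filter.tendsto_add_atTop_nat 1)) n

lemma stirling_seq_le (n : ℕ) : stirlingSeq (n+1) ≤ Real.exp 1 / Real.sqrt 2 := by
  have := stirlingSeq'_antitone (Nat.zero_le n)
  simpa [stirlingSeq_one] using this

lemma denom_eq (n : ℕ) (hn : 0 < n) :
    Real.sqrt (2*(n:ℝ)) * ((n:ℝ)/Real.exp 1)^n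
      = Real.sqrt 2 * ((n:ℝ)^n * Real.exp (-(n:ℝ)) * Real.sqrt n) := by
  rw [Real.sqrt_mul (by norm_num), div_pow, Real.exp_neg, ← Real.exp_nat_mul]
  field_simp

lemma stirling_lower (n : ℕ) (hn : 0 < n) :
    Real.sqrt (2*Real.pi) * ((n:ℝ)^n * Real.exp (-(n:ℝ)) * Real.sqrt n) ≤ n.factorial := by
  obtain ⟨m, rfl⟩ : ∃ m, n = m + 1 := ⟨n-1, by omega⟩
  have h := stirling_seq_ge m
  rw [stirlingSeq, le_div_iff₀ (by positivity)] at h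
  calc Real.sqrt (2*Real.pi) * ((↑(m+1):ℝ)^(m+1) * Real.exp (-(↑(m+1):ℝ)) * Real.sqrt (↑(m+1)))
      = Real.sqrt Real.pi * (Real.sqrt (2*(↑(m+1):ℝ)) * ((↑(m+1):ℝ)/Real.exp 1)^(m+1)) := by
        rw [denom_eq _ (Nat.succ_pos m), Real.sqrt_mul (by norm_num)]; push_cast; ring_nf; rw [pow_succ]; ring
    _ ≤ (m+1).factorial := h

lemma stirling_upper (n : ℕ) (hn : 0 < n) :
    (n.factorial : ℝ) ≤ Real.exp 1 * ((n:ℝ)^n * Real.exp (-(n:ℝ)) * Real.sqrt n) := by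
  obtain ⟨m, rfl⟩ : ∃ m, n = m + 1 := ⟨n-1, by omega⟩
  have h := stirling_seq_le m
  rw [stirlingSeq, div_le_div_iff₀ (by positivity) (by positivity)] at h
  rw [denom_eq (m+1) (Nat.succ_pos m)] at h
  have h2 : (0:ℝ) < Real.sqrt 2 := by positivity
  refine le_of_mul_le_mul_right ?_ h2
  calc ((m+1).factorial : ℝ) * Real.sqrt 2 ≤ _ := h
    _ = Real.exp 1 * ((↑(m+1):ℝ)^(m+1) * Real.exp (-(↑(m+1):ℝ)) * Real.sqrt (↑(m+1))) * Real.sqrt 2 := by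
        ring

lemma fact_le (k : ℕ) :
    (k.factorial : ℝ) ≤ Real.exp 1 * ((k:ℝ)^k * Real.exp (-(k:ℝ)) * Real.sqrt (max (k:ℝ) 1)) := by
  rcases Nat.eq_zero_or_pos k with rfl | hk
  · simp [Real.one_le_exp]
  · rw [max_eq_left (by exact_mod_cast hk)]
    exact stirling_upper k hk

lemma sqrt_prod' {ι : Type*} (s : Finset ι) (f : ι → ℝ) (hf : ∀ i ∈ s, 0 ≤ f i) :
    Real.sqrt (∏ i ∈ s, f i) = ∏ i ∈ s, Real.sqrt (f i) := by
  induction s using Finset.cons_induction with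
  | empty => simp
  | cons a s ha ih =>
      rw [Finset.prod_cons, Finset.prod_cons,
        Real.sqrt_mul (hf a (Finset.mem_cons_self a s)),
        ih (fun i hi => hf i (Finset.mem_cons_of_mem hi))]

/-- Stirling-type bound: for nonnegative integers `t_1,…,t_d` summing to `n`,
`(n^n / ∏ t_i^{t_i}) (∏ t_i! / n!) ≤ (e^d/√(2π)) √(t_1 ⋯ t_d / n)`,
where factors with `t_i = 0` contribute `1` in the product under the square root. -/
theorem stmt7 (d n : ℕ) (hn : 0 < n) (t : Fin d → ℕ) (ht : ∑ i, t i = n) :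
    ((n : ℝ) ^ n / ∏ i, (t i : ℝ) ^ (t i)) * ((∏ i, (t i).factorial : ℕ) / (n.factorial : ℝ)) ≤
      (Real.exp 1 ^ d / Real.sqrt (2 * Real.pi))
        * Real.sqrt ((∏ i, (max (t i) 1 : ℝ)) / n) := by
  have hpi : (0:ℝ) < Real.pi := Real.pi_pos
  have hP : (0:ℝ) < ∏ i, (t i : ℝ) ^ (t i) := by
    apply Finset.prod_pos; intro i _
    rcases Nat.eq_zero_or_pos (t i) with h | h
    · simp [h]
    · positivity
  set Q := ∏ i, Real.sqrt (max (t i:ℝ) 1) with hQdef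
  have hQ0 : 0 < Q := Finset.prod_pos fun i _ => Real.sqrt_pos.2 (by positivity)
  have hsum : ∑ i, -(t i:ℝ) = -(n:ℝ) := by
    rw [← ht]; push_cast; rw [Finset.sum_neg_distrib]
  have hF : ((∏ i, (t i).factorial : ℕ) : ℝ)
      ≤ Real.exp 1 ^ d * ((∏ i, (t i:ℝ)^(t i)) * Real.exp (-(n:ℝ)) * Q) := by
    push_cast
    calc (∏ i, ((t i).factorial : ℝ))
        ≤ ∏ i, Real.exp 1 * ((t i:ℝ)^(t i) * Real.exp (-(t i:ℝ)) * Real.sqrt (max (t i:ℝ) 1)) :=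
          Finset.prod_le_prod (fun i _ => by positivity) (fun i _ => fact_le (t i))
      _ = Real.exp 1 ^ d * ((∏ i, (t i:ℝ)^(t i)) * (∏ i, Real.exp (-(t i:ℝ))) * Q) := by
          simp only [Finset.prod_mul_distrib, Finset.prod_const, Finset.card_univ,
            Fintype.card_fin, hQdef]
      _ = _ := by rw [← Real.exp_sum, hsum]
  have hN := stirling_lower n hn
  have hsq : Real.sqrt ((∏ i, (max (t i) 1 : ℝ)) / n) = Q / Real.sqrt n := by
    rw [Real.sqrt_div (Finset.prod_nonneg fun i _ => by positivity),
      sqrt_prod' _ _ (fun i _ => by positivity)]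
  rw [hsq]
  have hne : ((n:ℝ)^n) ≠ 0 := by positivity
  have hsn : Real.sqrt (n:ℝ) ≠ 0 := by positivity
  have hs2 : Real.sqrt (2*Real.pi) ≠ 0 := by positivity
  have hexp : Real.exp (-(n:ℝ)) ≠ 0 := Real.exp_ne_zero _
  calc ((n : ℝ) ^ n / ∏ i, (t i : ℝ) ^ (t i)) * ((∏ i, (t i).factorial : ℕ) / (n.factorial : ℝ))
      = (n:ℝ)^n * ((∏ i, (t i).factorial : ℕ) : ℝ) / ((∏ i, (t i : ℝ) ^ (t i)) * n.factorial) := by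
        rw [div_mul_div_comm]
    _ ≤ (n:ℝ)^n * (Real.exp 1 ^ d * ((∏ i, (t i:ℝ)^(t i)) * Real.exp (-(n:ℝ)) * Q))
          / ((∏ i, (t i : ℝ) ^ (t i)) * (Real.sqrt (2*Real.pi) * ((n:ℝ)^n * Real.exp (-(n:ℝ)) * Real.sqrt n))) := by
        apply div_le_div₀ (by positivity)
          (mul_le_mul_of_nonneg_left hF (by positivity))
          (by positivity)
          (mul_le_mul_of_nonneg_left hN hP.le)
    _ = (Real.exp 1 ^ d / Real.sqrt (2 * Real.pi)) * (Q / Real.sqrt n) := by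
        field_simp
end

section
/- For two types s, t (d-tuples of nonnegative integers, each summing to n), define λ_{st} = C(2n+d-1, n)^{-1} Π_{i=1}^d C(s_i + t_i, s_i). Then the matrix (λ_{st}) indexed by types is symmetric and bi-stochastic: for every type t, Σ_{s type} λ_{st} = 1. -/
/-!
Since `∑ₖ C(k + a, k) Xᵏ = (1 - X)^-(a+1)`, the row sum `∑ₛ ∏ᵢ C(sᵢ + tᵢ, sᵢ)` is the coefficient
of `Xⁿ` in `∏ᵢ (1 - X)^-(tᵢ+1) = (1 - X)^-(n + d)`, namely `C(2n + d - 1, n)`.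
-/

noncomputable section

noncomputable def lam (d n : ℕ) (s t : Fin d → ℕ) : ℝ :=
  (((2 * n + d - 1).choose n : ℝ))⁻¹ * ∏ i, ((s i + t i).choose (s i) : ℝ)

open Finset PowerSeries

-- With `d = 0` the truncated subtraction gives `C(n - 1, n) = [n = 0]`, the coefficient of `1`.
theorem PowerSeries.coeff_invOneSubPow {S : Type*} [CommRing S] (d n : ℕ) :
    coeff n (invOneSubPow S d : S⟦X⟧) = (n + d - 1).choose n := by
  cases d with
  | zero =>
    cases n with
    | zero => simp [invOneSubPow_zero]
    | succ n => simp [invOneSubPow_zero, coeff_one]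
  | succ d =>
    rw [invOneSubPow_val_succ_eq_mk_add_choose, coeff_mk, ← add_assoc, Nat.add_sub_cancel,
      Nat.choose_symm_add, add_comm d n]

theorem PowerSeries.prod_invOneSubPow {S ι : Type*} [CommRing S] (s : Finset ι) (d : ι → ℕ) :
    ∏ i ∈ s, invOneSubPow S (d i) = invOneSubPow S (∑ i ∈ s, d i) := by
  simp only [invOneSubPow_eq_inv_one_sub_pow, prod_pow_eq_pow_sum]

theorem Finset.sum_finsuppAntidiag_eq_sum_piAntidiag {ι M : Type*} [DecidableEq ι]
    [AddCommMonoid M] (s : Finset ι) (n : ℕ) (f : (ι → ℕ) → M) :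
    ∑ l ∈ finsuppAntidiag s n, f l = ∑ l ∈ piAntidiag s n, f l := by
  rw [finsuppAntidiag, sum_map]
  exact sum_attach _ (fun l => f l)

theorem Nat.sum_piAntidiag_prod_add_choose {ι : Type*} [DecidableEq ι] (s : Finset ι)
    (t : ι → ℕ) (n : ℕ) :
    ∑ f ∈ piAntidiag s n, ∏ i ∈ s, (f i + t i).choose (f i)
      = (n + ∑ i ∈ s, t i + #s - 1).choose n := by
  have key := congrArg (coeff n ∘ Units.val) (prod_invOneSubPow (S := ℤ) s (fun i => t i + 1))
  simp only [Function.comp, Units.coe_prod, coeff_prod, coeff_invOneSubPow, ← add_assoc,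
    Nat.add_sub_cancel, sum_add_distrib, sum_const, smul_eq_mul, mul_one] at key
  rw [sum_finsuppAntidiag_eq_sum_piAntidiag s n
    (fun l => ∏ i ∈ s, (((l i + t i).choose (l i) : ℕ) : ℤ))] at key
  exact_mod_cast key

theorem lam_comm (d n : ℕ) (s t : Fin d → ℕ) : lam d n s t = lam d n t s := by
  unfold lam
  congr 1
  refine prod_congr rfl fun i _ => ?_
  rw [add_comm (t i), Nat.choose_symm_add]

theorem sum_lam_eq_one (d n : ℕ) (t : Fin d → ℕ) (ht : ∑ i, t i = n) :
    ∑ s ∈ Finset.Nat.antidiagonalTuple d n, lam d n s t = 1 := by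
  have row := Nat.sum_piAntidiag_prod_add_choose univ t n
  rw [piAntidiag_univ_fin_eq_antidiagonalTuple, ht, card_univ, Fintype.card_fin, ← two_mul] at row
  have hpos : 0 < (2 * n + d - 1).choose n := Nat.choose_pos (by omega)
  unfold lam
  rw [← mul_sum, inv_mul_eq_one₀ (by exact_mod_cast hpos.ne')]
  exact_mod_cast row.symm

theorem stmt11_general (d n : ℕ) :
    (∀ s t : Fin d → ℕ, lam d n s t = lam d n t s) ∧
    (∀ t : Fin d → ℕ, ∑ i, t i = n →
      ∑ s ∈ Finset.Nat.antidiagonalTuple d n, lam d n s t = 1) :=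
  ⟨lam_comm d n, sum_lam_eq_one d n⟩

/-- The matrix `(λ_{st})` indexed by types (d-tuples of nonnegative integers summing
to `n`) is symmetric and bi-stochastic. -/
theorem stmt11 (d n : ℕ) (hd : 0 < d) :
    (∀ s t : Fin d → ℕ, lam d n s t = lam d n t s) ∧
    (∀ t : Fin d → ℕ, ∑ i, t i = n →
      ∑ s ∈ Finset.Nat.antidiagonalTuple d n, lam d n s t = 1) :=
  stmt11_general d n
end
end

section
/- Let ~ be an equivalence relation on A^n × X^n with classes having uniform distributions Q_1,...,Q_N, and suppose there are constants α_k, α'_k ≥ 1 and ~-exchangeable distributions π_k on A^n × X^n with Q_k ≤ α_k π_k pointwise and π_{k,X^n} ≤ α'_k Q_{k,X^n} on the support of Q_{k,X^n} (marginals on X^n). Then for every ~-exchangeable distribution P on A^n × X^n, the conditional distribution satisfies P_{A^n|X^n}(a|x) ≤ N α α' Σ_{k=1}^N (1/N) π_{k,A^n|X^n}(a|x) for all x with P_{X^n}(x) > 0 and all a, where α = max_k α_k, α' = max_k α'_k. -/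
open scoped Classical BigOperators

noncomputable section

/-- Universal conditional de Finetti reduction: if each extreme point `Q_k` of the set
of `∼`-exchangeable distributions on `A^n × X^n` satisfies `Q_k ≤ α_k π_k` pointwise
and `π_{k,X^n} ≤ α'_k Q_{k,X^n}` on the support of `Q_{k,X^n}`, then every
`∼`-exchangeable distribution `P` satisfies
`P_{A^n|X^n}(a|x) ≤ N α α' ∑_k (1/N) π_{k,A^n|X^n}(a|x)` wherever `P_{X^n}(x) > 0`
(conditionals being `0` by convention where the conditioning marginal vanishes). -/
theorem stmt18 {A X : Type*} [Fintype A] [Fintype X] (n : ℕ)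
    (s : Setoid ((Fin n → A) × (Fin n → X)))
    (α α' : Quotient s → ℝ) (hα : ∀ k, 1 ≤ α k) (hα' : ∀ k, 1 ≤ α' k)
    (π : Quotient s → ((Fin n → A) × (Fin n → X)) → ℝ)
    (hπ0 : ∀ k p, 0 ≤ π k p) (hπ1 : ∀ k, ∑ p, π k p = 1)
    (hπexch : ∀ k p q, s.r p q → π k p = π k q)
    (hQπ : ∀ k p, unifClass s k p ≤ α k * π k p)
    (hmarg : ∀ k (x : Fin n → X), 0 < ∑ a, unifClass s k (a, x) →
      ∑ a, π k (a, x) ≤ α' k * ∑ a, unifClass s k (a, x))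
    (P : ((Fin n → A) × (Fin n → X)) → ℝ)
    (hP0 : ∀ p, 0 ≤ P p) (hP1 : ∑ p, P p = 1)
    (hPexch : ∀ p q, s.r p q → P p = P q)
    (N : ℕ) (hN : N = Fintype.card (Quotient s))
    (αmax α'max : ℝ) (hαmax : αmax = ⨆ k, α k) (hα'max : α'max = ⨆ k, α' k) :
    ∀ (a : Fin n → A) (x : Fin n → X), 0 < ∑ a', P (a', x) →
      P (a, x) / (∑ a', P (a', x)) ≤
        N * αmax * α'max *
          ∑ k : Quotient s, (1 / (N : ℝ)) * (π k (a, x) / ∑ a', π k (a', x)) := by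
  intro a x hPx
  haveI : Nonempty (Quotient s) := ⟨Quotient.mk s (a, x)⟩
  have hNpos : 0 < (N : ℝ) := by
    rw [hN]; exact_mod_cast Fintype.card_pos
  have hαle : ∀ k, α k ≤ αmax := fun k =>
    hαmax ▸ le_ciSup (Set.finite_range α).bddAbove k
  have hα'le : ∀ k, α' k ≤ α'max := fun k =>
    hα'max ▸ le_ciSup (Set.finite_range α').bddAbove k
  have hαm1 : (1 : ℝ) ≤ αmax := le_trans (hα _) (hαle (Quotient.mk s (a, x)))
  have hα'm1 : (1 : ℝ) ≤ α'max := le_trans (hα' _) (hα'le (Quotient.mk s (a, x)))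
  set c : Quotient s → ℝ := fun k => ∑ p, if Quotient.mk s p = k then P p else 0 with hc
  have hc0 : ∀ k, 0 ≤ c k := by
    intro k
    refine Finset.sum_nonneg fun p _ => ?_
    split <;> [exact hP0 p; exact le_rfl]
  have hU0 : ∀ k p, 0 ≤ unifClass s k p := by
    intro k p
    unfold unifClass
    split
    · positivity
    · exact le_rfl
  -- decomposition of P
  have hPd : ∀ p, P p = ∑ k, c k * unifClass s k p := by
    intro p
    have hmem : p ∈ Finset.univ.filter (fun w => Quotient.mk s w = Quotient.mk s p) :=
      Finset.mem_filter.mpr ⟨Finset.mem_univ p, rfl⟩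
    have hcard : 0 < (Finset.univ.filter
        (fun w => Quotient.mk s w = Quotient.mk s p)).card :=
      Finset.card_pos.mpr ⟨p, hmem⟩
    have hcP : c (Quotient.mk s p) =
        ((Finset.univ.filter (fun w => Quotient.mk s w = Quotient.mk s p)).card : ℝ) * P p := by
      rw [hc]
      simp only
      rw [← Finset.sum_filter]
      rw [Finset.sum_congr rfl (fun q hq => hPexch q p (Quotient.exact (Finset.mem_filter.mp hq).2))]
      rw [Finset.sum_const, nsmul_eq_mul]
    simp only [unifClass, mul_ite, mul_zero]
    rw [Finset.sum_ite_eq Finset.univ (Quotient.mk s p)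
      (fun k => c k * ((1:ℝ) / ((Finset.univ.filter
        (fun w => Quotient.mk s w = k)).card : ℝ)))]
    simp only [Finset.mem_univ, if_true]
    have hcard' : (((Finset.univ.filter
        (fun w => Quotient.mk s w = Quotient.mk s p)).card : ℝ)) ≠ 0 :=
      Nat.cast_ne_zero.mpr hcard.ne'
    rw [hcP, mul_one_div, mul_comm, mul_div_assoc, div_self hcard', mul_one]
  -- marginal decomposition
  have hPXd : ∑ a', P (a', x) = ∑ k, c k * (∑ a', unifClass s k (a', x)) := by
    simp_rw [hPd, Finset.mul_sum]
    exact Finset.sum_comm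
  -- termwise bound
  have key : ∀ k ∈ Finset.univ, c k * unifClass s k (a, x) / (∑ a', P (a', x)) ≤
      αmax * α'max * (π k (a, x) / ∑ a', π k (a', x)) := by
    intro k _
    rcases eq_or_lt_of_le (hc0 k) with hck | hck
    · rw [← hck, zero_mul, zero_div]
      have := hπ0 k (a, x)
      have : 0 ≤ π k (a, x) / ∑ a', π k (a', x) :=
        div_nonneg (hπ0 k (a, x)) (Finset.sum_nonneg fun a' _ => hπ0 k (a', x))
      positivity
    rcases eq_or_lt_of_le (hU0 k (a, x)) with hQ | hQ
    · rw [← hQ, mul_zero, zero_div]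
      have : 0 ≤ π k (a, x) / ∑ a', π k (a', x) :=
        div_nonneg (hπ0 k (a, x)) (Finset.sum_nonneg fun a' _ => hπ0 k (a', x))
      positivity
    have hQX : 0 < ∑ a', unifClass s k (a', x) :=
      lt_of_lt_of_le hQ (Finset.single_le_sum (fun a' _ => hU0 k (a', x)) (Finset.mem_univ a))
    have h1 : unifClass s k (a, x) ≤ α k * π k (a, x) := hQπ k (a, x)
    have h2 : ∑ a', π k (a', x) ≤ α' k * ∑ a', unifClass s k (a', x) := hmarg k x hQX
    have hαk : 0 < α k := lt_of_lt_of_le one_pos (hα k)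
    have hπpos : 0 < π k (a, x) := by nlinarith
    have hπX : 0 < ∑ a', π k (a', x) :=
      lt_of_lt_of_le hπpos (Finset.single_le_sum (fun a' _ => hπ0 k (a', x)) (Finset.mem_univ a))
    have h3 : c k * (∑ a', unifClass s k (a', x)) ≤ ∑ a', P (a', x) := by
      rw [hPXd]
      exact Finset.single_le_sum
        (f := fun j => c j * ∑ a', unifClass s j (a', x))
        (fun j _ => mul_nonneg (hc0 j) (Finset.sum_nonneg fun a' _ => hU0 j (a', x)))
        (Finset.mem_univ k)
    rw [← mul_div_assoc, div_le_div_iff₀ hPx hπX]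
    have step1 : unifClass s k (a, x) * (∑ a', π k (a', x)) ≤
        (α k * π k (a, x)) * (α' k * ∑ a', unifClass s k (a', x)) :=
      mul_le_mul h1 h2 hπX.le (mul_nonneg hαk.le hπpos.le)
    have step2 : c k * (unifClass s k (a, x) * (∑ a', π k (a', x))) ≤
        c k * ((α k * π k (a, x)) * (α' k * ∑ a', unifClass s k (a', x))) :=
      mul_le_mul_of_nonneg_left step1 hck.le
    have step3 : (α k * α' k) * π k (a, x) * (c k * (∑ a', unifClass s k (a', x))) ≤
        (α k * α' k) * π k (a, x) * (∑ a', P (a', x)) :=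
      mul_le_mul_of_nonneg_left h3
        (mul_nonneg (mul_nonneg hαk.le (lt_of_lt_of_le one_pos (hα' k)).le) hπpos.le)
    have step4 : (α k * α' k) * π k (a, x) * (∑ a', P (a', x)) ≤
        (αmax * α'max) * π k (a, x) * (∑ a', P (a', x)) := by
      have hak := hαle k
      have hak' := hα'le k
      have h1k := hα k
      have h1k' := hα' k
      have haa : α k * α' k ≤ αmax * α'max :=
        mul_le_mul hak hak' (by linarith) (by linarith)
      nlinarith [mul_pos hπpos hPx, haa]
    nlinarith [step2, step3, step4]
  calc P (a, x) / ∑ a', P (a', x)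
      = ∑ k, c k * unifClass s k (a, x) / (∑ a', P (a', x)) := by
        rw [hPd (a, x), Finset.sum_div]
    _ ≤ ∑ k : Quotient s, αmax * α'max * (π k (a, x) / ∑ a', π k (a', x)) :=
        Finset.sum_le_sum key
    _ = N * αmax * α'max *
          ∑ k : Quotient s, (1 / (N : ℝ)) * (π k (a, x) / ∑ a', π k (a', x)) := by
        rw [← Finset.mul_sum, ← Finset.mul_sum, ← mul_assoc]
        field_simp
end
end
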